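/- arXiv:2204.08081 — 2 statements merged into one kernel-verified Lean document; each statement's English description precedes it below -/
import Mathlib

section
/- Let U_T, U_T^ε ∈ ℝⁿ satisfy ‖U_T − U_T^ε‖ ≤ ε for some ε > 0, and let 0 ≤ t ≤ T. Then the cut-off projections applied to the two final data satisfy the stability estimate ‖P^ε U(t) − P^ε U^ε(t)‖ ≤ e^{M_ε (T−t)} ε. (Paper's Theorem 3.) -/
/-!
Both projections are linear in the final datum, so their difference is the cut-off projection of
`U_T - U_Tᵉ`. In the orthonormal basis this rescales each retained coordinate by
`e^{λ_i (T - t)} ≤ e^{M_ε (T - t)}` and discards the rest, so by Bessel's inequality its norm is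
at most `e^{M_ε (T - t)} ‖U_T - U_Tᵉ‖`.
-/

open scoped RealInnerProductSpace

namespace Orthonormal

variable {ι E : Type*} [NormedAddCommGroup E] [InnerProductSpace ℝ E] {b : ι → E}

theorem norm_sum_smul_sq (hb : Orthonormal ℝ b) (s : Finset ι) (c : ι → ℝ) :
    ‖∑ i ∈ s, c i • b i‖ ^ 2 = ∑ i ∈ s, c i ^ 2 := by
  rw [← real_inner_self_eq_norm_sq, hb.inner_sum]
  simp [sq]

theorem norm_sum_mul_inner_smul_le (hb : Orthonormal ℝ b) (s : Finset ι) {w : ι → ℝ} {C : ℝ}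
    (hC : 0 ≤ C) (hw : ∀ i ∈ s, |w i| ≤ C) (v : E) :
    ‖∑ i ∈ s, (w i * ⟪v, b i⟫) • b i‖ ≤ C * ‖v‖ := by
  have hsq : ‖∑ i ∈ s, (w i * ⟪v, b i⟫) • b i‖ ^ 2 ≤ (C * ‖v‖) ^ 2 :=
    calc ‖∑ i ∈ s, (w i * ⟪v, b i⟫) • b i‖ ^ 2 = ∑ i ∈ s, w i ^ 2 * ⟪v, b i⟫ ^ 2 := by
          simp only [hb.norm_sum_smul_sq, mul_pow]
      _ ≤ ∑ i ∈ s, C ^ 2 * ⟪b i, v⟫ ^ 2 := by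
          refine Finset.sum_le_sum fun i hi => ?_
          rw [real_inner_comm]
          exact mul_le_mul_of_nonneg_right (sq_le_sq.2 ((hw i hi).trans (le_abs_self C)))
            (sq_nonneg _)
      _ = C ^ 2 * ∑ i ∈ s, ‖⟪b i, v⟫‖ ^ 2 := by simp [Finset.mul_sum]
      _ ≤ C ^ 2 * ‖v‖ ^ 2 := by gcongr; exact hb.sum_inner_products_le v
      _ = (C * ‖v‖) ^ 2 := (mul_pow C ‖v‖ 2).symm
  exact (pow_le_pow_iff_left₀ (norm_nonneg _) (by positivity) two_ne_zero).1 hsq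

end Orthonormal

theorem cutoff_projection_stability_general (n : ℕ)
    (φ : OrthonormalBasis (Fin n) ℝ (EuclideanSpace ℝ (Fin n)))
    (lam : Fin n → ℝ)
    (Me : ℝ)
    (T t : ℝ) (htT : t ≤ T)
    (UT UTe : EuclideanSpace ℝ (Fin n)) (ε : ℝ)
    (hnoise : ‖UT - UTe‖ ≤ ε) :
    ‖(∑ i ∈ Finset.univ.filter (fun i => lam i ≤ Me),
        (Real.exp (lam i * (T - t)) * ⟪UT, φ i⟫) • φ i) -
      ∑ i ∈ Finset.univ.filter (fun i => lam i ≤ Me),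
        (Real.exp (lam i * (T - t)) * ⟪UTe, φ i⟫) • φ i‖
      ≤ Real.exp (Me * (T - t)) * ε := by
  have hgain : ∀ i ∈ Finset.univ.filter (fun i => lam i ≤ Me),
      |Real.exp (lam i * (T - t))| ≤ Real.exp (Me * (T - t)) := fun i hi => by
    rw [abs_of_pos (Real.exp_pos _), Real.exp_le_exp]
    exact mul_le_mul_of_nonneg_right (Finset.mem_filter.1 hi).2 (sub_nonneg.2 htT)
  rw [← Finset.sum_sub_distrib]
  simp_rw [← sub_smul, ← mul_sub, ← inner_sub_left]
  calc _ ≤ Real.exp (Me * (T - t)) * ‖UT - UTe‖ :=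
        φ.orthonormal.norm_sum_mul_inner_smul_le _ (Real.exp_pos _).le hgain _
    _ ≤ Real.exp (Me * (T - t)) * ε := by gcongr

/-- Paper's Theorem 3: stability estimate
`‖P^ε U(t) − P^ε U^ε(t)‖ ≤ e^{M_ε (T−t)} ε`. -/
theorem cutoff_projection_stability (n : ℕ) (hn : 0 < n)
    (φ : OrthonormalBasis (Fin n) ℝ (EuclideanSpace ℝ (Fin n)))
    (lam : Fin n → ℝ) (hlam : ∀ i, 0 ≤ lam i)
    (Me : ℝ) (hMe : 0 < Me)
    (T t : ℝ) (hT : 0 < T) (ht0 : 0 ≤ t) (htT : t ≤ T)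
    (UT UTe : EuclideanSpace ℝ (Fin n)) (ε : ℝ) (hε : 0 < ε)
    (hnoise : ‖UT - UTe‖ ≤ ε) :
    ‖(∑ i ∈ Finset.univ.filter (fun i => lam i ≤ Me),
        (Real.exp (lam i * (T - t)) * ⟪UT, φ i⟫) • φ i) -
      ∑ i ∈ Finset.univ.filter (fun i => lam i ≤ Me),
        (Real.exp (lam i * (T - t)) * ⟪UTe, φ i⟫) • φ i‖
      ≤ Real.exp (Me * (T - t)) * ε :=
  cutoff_projection_stability_general n φ lam Me T t htT UT UTe ε hnoise
end

section
/- Let ε ∈ (0,1), γ ∈ (0,1), 0 ≤ t ≤ T, and choose the regularization parameter M_ε = T^{-1} ln(ε^{-γ}). If U_T, U_T^ε ∈ ℝⁿ satisfy ‖U_T − U_T^ε‖ ≤ ε, then ‖U(t) − P^ε U^ε(t)‖ ≤ (T / ln(ε^{-γ})) ‖U′(t)‖ + ε^{1 − γ(1 − t/T)}, where U′(t) = − Σ_{i=1}^n λ_i e^{λ_i(T−t)} ⟨U_T, φ_i⟩ φ_i. (Convergence rate (fff) of the paper's Theorem 4.) -/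
open scoped RealInnerProductSpace BigOperators

/-! Split `U(t) − P^ε U^ε(t)` into the modes cut off by the regularization (`λ_i > M_ε`) and
the noise propagated on the kept modes (`λ_i ≤ M_ε`). On a cut-off mode the coefficient of `U(t)`
is that of `U′(t)` divided by `λ_i > M_ε`, which gives the factor `M_ε⁻¹ = T / ln(ε^{-γ})`; on a
kept mode the noise is amplified by at most `e^{M_ε (T − t)} = ε^{-γ(1 − t/T)}`. Both bounds
follow from Parseval's identity. -/

section Orthonormal

variable {ι E : Type*} [NormedAddCommGroup E] [InnerProductSpace ℝ E] {v : ι → E}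

theorem Orthonormal.norm_sum_smul_sq_s5 (hv : Orthonormal ℝ v) (s : Finset ι) (a : ι → ℝ) :
    ‖∑ i ∈ s, a i • v i‖ ^ 2 = ∑ i ∈ s, a i ^ 2 := by
  rw [← real_inner_self_eq_norm_sq, hv.inner_sum]
  simp only [conj_trivial, sq]

theorem Orthonormal.norm_sum_smul_le_mul (hv : Orthonormal ℝ v) {s t : Finset ι} (hst : s ⊆ t)
    {a b : ι → ℝ} {C : ℝ} (hC : 0 ≤ C) (hab : ∀ i ∈ s, |a i| ≤ C * |b i|) :
    ‖∑ i ∈ s, a i • v i‖ ≤ C * ‖∑ i ∈ t, b i • v i‖ := by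
  rw [← pow_le_pow_iff_left₀ (norm_nonneg _) (by positivity) two_ne_zero, mul_pow,
    hv.norm_sum_smul_sq_s5, hv.norm_sum_smul_sq_s5, Finset.mul_sum]
  calc ∑ i ∈ s, a i ^ 2 ≤ ∑ i ∈ s, C ^ 2 * b i ^ 2 := by
        refine Finset.sum_le_sum fun i hi => ?_
        rw [← mul_pow, sq_le_sq, abs_mul, abs_of_nonneg hC]
        exact hab i hi
    _ ≤ ∑ i ∈ t, C ^ 2 * b i ^ 2 :=
        Finset.sum_le_sum_of_subset_of_nonneg hst fun i _ _ => by positivity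

end Orthonormal

theorem Finset.sum_smul_sub_sum_filter_smul {ι R M : Type*} [Fintype ι] [Ring R]
    [AddCommGroup M] [Module R M] (p : ι → Prop) [DecidablePred p] (a b : ι → R) (v : ι → M) :
    ∑ i, a i • v i - ∑ i ∈ univ.filter p, b i • v i =
      ∑ i ∈ univ.filter (fun i => ¬p i), a i • v i + ∑ i ∈ univ.filter p, (a i - b i) • v i := by
  rw [← sum_filter_add_sum_filter_not univ p]
  simp only [sub_smul, sum_sub_distrib]
  abel

theorem exp_mul_mul_eq_rpow {ε : ℝ} (hε : 0 < ε) (γ T t : ℝ) (hT : 0 < T) :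
    Real.exp (T⁻¹ * Real.log (ε ^ (-γ)) * (T - t)) * ε = ε ^ (1 - γ * (1 - t / T)) := by
  rw [Real.log_rpow hε, Real.rpow_def_of_pos hε, ← Real.exp_log hε, ← Real.exp_add,
    Real.log_exp]
  congr 1
  field_simp
  ring

theorem convergence_rate_general (n : ℕ)
    (φ : OrthonormalBasis (Fin n) ℝ (EuclideanSpace ℝ (Fin n)))
    (lam : Fin n → ℝ)
    (ε γ : ℝ) (hε : ε ∈ Set.Ioo (0:ℝ) 1) (hγ : γ ∈ Set.Ioo (0:ℝ) 1)
    (T t : ℝ) (hT : 0 < T) (htT : t ≤ T)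
    (Me : ℝ) (hMe : Me = T⁻¹ * Real.log (ε ^ (-γ)))
    (UT UTe : EuclideanSpace ℝ (Fin n))
    (hnoise : ‖UT - UTe‖ ≤ ε) :
    ‖(∑ i : Fin n, (Real.exp (lam i * (T - t)) * ⟪UT, φ i⟫) • φ i) -
      ∑ i ∈ Finset.univ.filter (fun i => lam i ≤ Me),
        (Real.exp (lam i * (T - t)) * ⟪UTe, φ i⟫) • φ i‖
      ≤ (T / Real.log (ε ^ (-γ))) *
          ‖-∑ i : Fin n, (lam i * Real.exp (lam i * (T - t)) * ⟪UT, φ i⟫) • φ i‖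
        + ε ^ (1 - γ * (1 - t / T)) := by
  obtain ⟨hε0, hε1⟩ := hε
  have hlog : 0 < Real.log (ε ^ (-γ)) := by
    rw [Real.log_rpow hε0]
    exact mul_pos_of_neg_of_neg (neg_neg_of_pos hγ.1) (Real.log_neg hε0 hε1)
  have hMe0 : 0 < Me := hMe ▸ mul_pos (inv_pos.mpr hT) hlog
  rw [Finset.sum_smul_sub_sum_filter_smul, norm_neg]
  refine (norm_add_le _ _).trans (add_le_add ?_ ?_)
  · refine φ.orthonormal.norm_sum_smul_le_mul (Finset.subset_univ _) (by positivity)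
      fun i hi => ?_
    have hMi : Me < lam i := lt_of_not_ge (Finset.mem_filter.mp hi).2
    have hMe_inv : T / Real.log (ε ^ (-γ)) = Me⁻¹ := by rw [hMe]; field_simp
    rw [hMe_inv, le_inv_mul_iff₀ hMe0, mul_assoc, abs_mul (lam i), abs_of_pos (hMe0.trans hMi)]
    gcongr
  · calc _ ≤ Real.exp (Me * (T - t)) * ‖∑ i, ⟪UT - UTe, φ i⟫ • φ i‖ := by
          refine φ.orthonormal.norm_sum_smul_le_mul (Finset.subset_univ _) (by positivity)
            fun i hi => ?_
          rw [← mul_sub, ← inner_sub_left, abs_mul, Real.abs_exp]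
          gcongr
          exact (Finset.mem_filter.mp hi).2
      _ = Real.exp (Me * (T - t)) * ‖UT - UTe‖ := by
          simp only [real_inner_comm _ (UT - UTe), φ.sum_repr']
      _ ≤ Real.exp (Me * (T - t)) * ε := by gcongr
      _ = ε ^ (1 - γ * (1 - t / T)) := hMe ▸ exp_mul_mul_eq_rpow hε0 γ T t hT

/-- Convergence rate (fff) of the paper's Theorem 4: with
`M_ε = T⁻¹ ln(ε^{-γ})`, one has
`‖U(t) − P^ε U^ε(t)‖ ≤ (T / ln(ε^{-γ})) ‖U′(t)‖ + ε^{1 − γ(1 − t/T)}`. -/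
theorem convergence_rate (n : ℕ) (hn : 0 < n)
    (φ : OrthonormalBasis (Fin n) ℝ (EuclideanSpace ℝ (Fin n)))
    (lam : Fin n → ℝ) (hlam : ∀ i, 0 ≤ lam i)
    (ε γ : ℝ) (hε : ε ∈ Set.Ioo (0:ℝ) 1) (hγ : γ ∈ Set.Ioo (0:ℝ) 1)
    (T t : ℝ) (hT : 0 < T) (ht0 : 0 ≤ t) (htT : t ≤ T)
    (Me : ℝ) (hMe : Me = T⁻¹ * Real.log (ε ^ (-γ)))
    (UT UTe : EuclideanSpace ℝ (Fin n))
    (hnoise : ‖UT - UTe‖ ≤ ε) :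
    ‖(∑ i : Fin n, (Real.exp (lam i * (T - t)) * ⟪UT, φ i⟫) • φ i) -
      ∑ i ∈ Finset.univ.filter (fun i => lam i ≤ Me),
        (Real.exp (lam i * (T - t)) * ⟪UTe, φ i⟫) • φ i‖
      ≤ (T / Real.log (ε ^ (-γ))) *
          ‖-∑ i : Fin n, (lam i * Real.exp (lam i * (T - t)) * ⟪UT, φ i⟫) • φ i‖
        + ε ^ (1 - γ * (1 - t / T)) :=
  convergence_rate_general n φ lam ε γ hε hγ T t hT htT Me hMe UT UTe hnoise
end
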